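/- arXiv:2601.11799 — 6 statements merged into one kernel-verified Lean document; each statement's English description precedes it below -/
import Mathlib

section
/- Let α ∈ (0,1) be a quadratic irrational with primitive integer minimal polynomial f(x) = ax² + bx + c and height H = max(|a|,|b|,|c|) ≥ 1. Let N = exit(α) and put θ_{N-1} = {3^{N-1} α} ∈ M = [1/3, 2/3). Then dist(θ_{N-1}, {1/3, 2/3}) ≥ 1 / (30 · H² · 3^N). -/
/-- θ_n(α) = {3^n α}, the fractional part of 3^n α. -/
noncomputable def theta (α : ℝ) (n : ℕ) : ℝ := Int.fract (3 ^ n * α)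

/-!
If `a α² + b α + c = 0` with `α` irrational, then for integers `p` and `q ≠ 0` the integer
`a p² + b p q + c q²` is nonzero and factors as `(p - qα)(a(p + qα) + bq)`. The second factor
is at most `4 H q` when `|α| ≤ 1` and `qα` is within `1` of `p`, so `|qα - p| ≥ 1 / (4 H q)`.
With `3^(N-1) α = k + θ`, the distances `3 |θ - 1/3|` and `3 |θ - 2/3|` are exactly
`|3^N α - (3k + 1)|` and `|3^N α - (3k + 2)|`, whence both are at least `1 / (12 H 3^N)`.
-/

theorem quadForm_eq_mul_of_root {R : Type*} [CommRing R] {a b c x : R}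
    (hx : a * x ^ 2 + b * x + c = 0) (p q : R) :
    a * p ^ 2 + b * p * q + c * q ^ 2 = (p - q * x) * (a * (p + q * x) + b * q) := by
  linear_combination q ^ 2 * hx

theorem Irrational.quadForm_ne_zero {α : ℝ} (hα : Irrational α) {a b c : ℤ} (ha : a ≠ 0)
    (hroot : (a : ℝ) * α ^ 2 + b * α + c = 0) (p : ℤ) {q : ℤ} (hq : q ≠ 0) :
    a * p ^ 2 + b * p * q + c * q ^ 2 ≠ 0 := by
  have hleft : (p : ℝ) - q * α ≠ 0 := sub_ne_zero.2 ((hα.intCast_mul hq).ne_int p).symm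
  have hright : (a : ℝ) * (p + q * α) + b * q ≠ 0 := by
    have := ((hα.intCast_mul (mul_ne_zero ha hq)).add_intCast (a * p + b * q)).ne_zero
    push_cast at this
    contrapose! this
    linear_combination this
  rw [← Int.cast_ne_zero (α := ℝ)]
  push_cast
  rw [quadForm_eq_mul_of_root hroot]
  exact mul_ne_zero hleft hright

theorem Irrational.one_le_mul_abs_mul_sub_of_quadratic {α : ℝ} (hα : Irrational α)
    (hα1 : |α| ≤ 1) {a b c : ℤ} (ha : a ≠ 0) (hroot : (a : ℝ) * α ^ 2 + b * α + c = 0)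
    {H : ℝ} (haH : |(a : ℝ)| ≤ H) (hbH : |(b : ℝ)| ≤ H) (p : ℤ) {q : ℤ} (hq : 1 ≤ q)
    (hpq : |q * α - p| ≤ 1) :
    1 ≤ 4 * H * q * |q * α - p| := by
  rw [abs_sub_comm] at hpq ⊢
  have hq1 : (1 : ℝ) ≤ q := by exact_mod_cast hq
  have hform : (1 : ℝ) ≤ |(p : ℝ) - q * α| * |a * (p + q * α) + b * q| := by
    have hne := hα.quadForm_ne_zero ha hroot p (by omega : q ≠ 0)
    have h1 : (1 : ℝ) ≤ |((a * p ^ 2 + b * p * q + c * q ^ 2 : ℤ) : ℝ)| := by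
      exact_mod_cast Int.one_le_abs hne
    push_cast at h1
    rwa [quadForm_eq_mul_of_root hroot, abs_mul] at h1
  have hqα : |(q : ℝ) * α| ≤ q := by
    rw [abs_mul, abs_of_pos (by linarith : (0 : ℝ) < q)]
    exact mul_le_of_le_one_right (by linarith) hα1
  have hsecond : |(a : ℝ) * (p + q * α) + b * q| ≤ 4 * H * q := by
    have hsum : |(p : ℝ) + q * α| ≤ 1 + 2 * q := by
      calc |(p : ℝ) + q * α| = |((p : ℝ) - q * α) + 2 * (q * α)| := by ring_nf
        _ ≤ |(p : ℝ) - q * α| + 2 * |(q : ℝ) * α| := by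
          simpa [abs_mul] using abs_add_le ((p : ℝ) - q * α) (2 * ((q : ℝ) * α))
        _ ≤ 1 + 2 * q := by linarith
    have hH0 : 0 ≤ H := (abs_nonneg _).trans haH
    calc |(a : ℝ) * (p + q * α) + b * q|
        ≤ |(a : ℝ)| * |(p : ℝ) + q * α| + |(b : ℝ)| * q := by
          simpa [abs_mul, abs_of_pos (by linarith : (0 : ℝ) < q)] using
            abs_add_le ((a : ℝ) * (p + q * α)) (b * q)
      _ ≤ H * (1 + 2 * q) + H * q := by gcongr
      _ ≤ 4 * H * q := by nlinarith
  calc 1 ≤ |(p : ℝ) - q * α| * |a * (p + q * α) + b * q| := hform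
    _ ≤ |(p : ℝ) - q * α| * (4 * H * q) := by gcongr
    _ = 4 * H * q * |(p : ℝ) - q * α| := mul_comm _ _

theorem three_pow_succ_mul_sub_eq (α : ℝ) (n : ℕ) (j : ℤ) :
    (3 : ℝ) ^ (n + 1) * α - (3 * ⌊(3 : ℝ) ^ n * α⌋ + j) = 3 * (theta α n - j / 3) := by
  rw [theta, Int.fract]
  ring

theorem Irrational.one_le_mul_abs_theta_sub_of_quadratic {α : ℝ} (hα : Irrational α)
    (hα1 : |α| ≤ 1) {a b c : ℤ} (ha : a ≠ 0) (hroot : (a : ℝ) * α ^ 2 + b * α + c = 0)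
    {H : ℝ} (haH : |(a : ℝ)| ≤ H) (hbH : |(b : ℝ)| ≤ H) (n : ℕ) (j : ℤ)
    (hj : |theta α n - j / 3| ≤ 1 / 3) :
    1 ≤ 12 * H * 3 ^ (n + 1) * |theta α n - j / 3| := by
  have hq : (1 : ℤ) ≤ 3 ^ (n + 1) := one_le_pow₀ (by norm_num)
  have hdist : |((3 ^ (n + 1) : ℤ) : ℝ) * α - ((3 * ⌊(3 : ℝ) ^ n * α⌋ + j : ℤ) : ℝ)|
      = 3 * |theta α n - j / 3| := by
    push_cast
    rw [three_pow_succ_mul_sub_eq, abs_mul, abs_of_pos three_pos]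
  have hbound := hα.one_le_mul_abs_mul_sub_of_quadratic hα1 ha hroot haH hbH _ hq (by linarith)
  rw [hdist] at hbound
  push_cast at hbound
  linarith

theorem stmt1_general (α : ℝ) (a b c : ℤ) (H : ℕ)
    (hα0 : 0 < α) (hα1 : α < 1) (hirr : Irrational α)
    (ha : a ≠ 0) (hroot : (a : ℝ) * α ^ 2 + (b : ℝ) * α + (c : ℝ) = 0)
    (hH : H = max a.natAbs (max b.natAbs c.natAbs)) (hH1 : 1 ≤ H)
    (N : ℕ) (hN : 1 ≤ N)
    (hexit : theta α (N - 1) ∈ Set.Ico (1/3 : ℝ) (2/3)) :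
    Metric.infDist (theta α (N - 1)) ({1/3, 2/3} : Set ℝ)
      ≥ 1 / (30 * (H : ℝ) ^ 2 * 3 ^ N) := by
  obtain ⟨n, rfl⟩ : ∃ n, N = n + 1 := ⟨N - 1, by omega⟩
  rw [Nat.add_sub_cancel] at hexit ⊢
  have hαabs : |α| ≤ 1 := abs_le.2 ⟨by linarith, hα1.le⟩
  have haH : |(a : ℝ)| ≤ H := by
    rw [← Int.cast_abs, ← Int.natCast_natAbs]
    exact_mod_cast (hH ▸ le_max_left _ _ : a.natAbs ≤ H)
  have hbH : |(b : ℝ)| ≤ H := by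
    rw [← Int.cast_abs, ← Int.natCast_natAbs]
    exact_mod_cast (hH ▸ (le_max_left _ _).trans (le_max_right _ _) : b.natAbs ≤ H)
  have hH1' : (1 : ℝ) ≤ H := by exact_mod_cast hH1
  have hclear : ∀ j : ℤ, |theta α n - j / 3| ≤ 1 / 3 →
      1 / (30 * (H : ℝ) ^ 2 * 3 ^ (n + 1)) ≤ |theta α n - j / 3| := by
    intro j hj
    have h := hirr.one_le_mul_abs_theta_sub_of_quadratic hαabs ha hroot haH hbH n j hj
    rw [div_le_iff₀ (by positivity)]
    nlinarith [abs_nonneg (theta α n - j / 3), pow_pos (three_pos : (0 : ℝ) < 3) (n + 1)]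
  obtain ⟨hlo, hhi⟩ := hexit
  rw [ge_iff_le, Metric.le_infDist (by simp)]
  rintro y (rfl | rfl)
  · simpa [Real.dist_eq] using hclear 1 (by rw [abs_le]; push_cast; constructor <;> linarith)
  · simpa [Real.dist_eq] using hclear 2 (by rw [abs_le]; push_cast; constructor <;> linarith)

/-- Exit clearance lower bound: for a quadratic irrational α ∈ (0,1) with
primitive minimal polynomial ax²+bx+c, height H = max(|a|,|b|,|c|) ≥ 1,
and exit time N (θ_{N-1} ∈ M, θ_m ∉ M for m < N-1), one has
dist(θ_{N-1}, {1/3, 2/3}) ≥ 1/(30 H² 3^N). -/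
theorem stmt1 (α : ℝ) (a b c : ℤ) (H : ℕ)
    (hα0 : 0 < α) (hα1 : α < 1) (hirr : Irrational α)
    (ha : a ≠ 0) (hroot : (a : ℝ) * α ^ 2 + (b : ℝ) * α + (c : ℝ) = 0)
    (hprim : Int.gcd a (Int.gcd b c) = 1)
    (hH : H = max a.natAbs (max b.natAbs c.natAbs)) (hH1 : 1 ≤ H)
    (N : ℕ) (hN : 1 ≤ N)
    (hexit : theta α (N - 1) ∈ Set.Ico (1/3 : ℝ) (2/3))
    (hmin : ∀ m, m < N - 1 → theta α m ∉ Set.Ico (1/3 : ℝ) (2/3)) :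
    Metric.infDist (theta α (N - 1)) ({1/3, 2/3} : Set ℝ)
      ≥ 1 / (30 * (H : ℝ) ^ 2 * 3 ^ N) :=
  stmt1_general α a b c H hα0 hα1 hirr ha hroot hH hH1 N hN hexit
end

section
/- Let α ∈ (0,1) be a quadratic irrational of height H ≥ 2 with finite exit time N = exit(α). Then the distance from α to the middle-third Cantor set 𝒞 satisfies dist(α, 𝒞) ≥ (1 / (30 H²)) · 3^{-2N}. -/
theorem exists_mem_cantorSet_eq_div_three {x : ℝ} (hx : x ∈ cantorSet) :
    ∃ y ∈ cantorSet, x = y / 3 ∨ x = (2 + y) / 3 := by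
  rw [cantorSet_eq_union_halves] at hx
  rcases hx with ⟨y, hy, rfl⟩ | ⟨y, hy, rfl⟩
  exacts [⟨y, hy, .inl rfl⟩, ⟨y, hy, .inr rfl⟩]

theorem notMem_Ioo_of_mem_cantorSet {x : ℝ} (hx : x ∈ cantorSet) (k : ℤ) :
    x ∉ Set.Ioo (k + 1 / 3 : ℝ) (k + 2 / 3) := by
  rintro ⟨hlt, hgt⟩
  obtain ⟨y, hy, hxy⟩ := exists_mem_cantorSet_eq_div_three hx
  obtain ⟨hy0, hy1⟩ := cantorSet_subset_unitInterval hy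
  obtain rfl : k = 0 := by
    have hk : (k : ℝ) < 1 ∧ -1 < (k : ℝ) := by
      rcases hxy with rfl | rfl <;> constructor <;> linarith
    have hk1 : k < 1 := by exact_mod_cast hk.1
    have hk2 : -1 < k := by exact_mod_cast hk.2
    omega
  rcases hxy with rfl | rfl <;> push_cast at hlt hgt <;> linarith

theorem pow_three_mul_notMem_Ioo_of_mem_cantorSet {x : ℝ} (hx : x ∈ cantorSet) (n : ℕ)
    (k : ℤ) : 3 ^ n * x ∉ Set.Ioo (k + 1 / 3 : ℝ) (k + 2 / 3) := by
  induction n generalizing x k with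
  | zero => simpa using notMem_Ioo_of_mem_cantorSet hx k
  | succ n ih =>
    obtain ⟨y, hy, rfl | rfl⟩ := exists_mem_cantorSet_eq_div_three hx
    · rw [pow_succ, mul_assoc, mul_div_cancel₀ y three_ne_zero]
      exact ih hy k
    · have hshift : 3 ^ (n + 1) * ((2 + y) / 3) = 3 ^ n * y + ((2 * 3 ^ n : ℤ) : ℝ) := by
        push_cast; ring
      rw [hshift, ← sub_add_cancel (k : ℝ) ((2 * 3 ^ n : ℤ) : ℝ), ← Int.cast_sub]
      simpa only [add_assoc, add_comm _ ((2 * 3 ^ n : ℤ) : ℝ), Set.mem_Ioo, add_lt_add_iff_left]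
        using ih hy (k - 2 * 3 ^ n)

theorem min_sub_le_abs_sub_of_notMem_Ioo {l r u y : ℝ} (hy : y ∉ Set.Ioo l r) :
    min (u - l) (r - u) ≤ |u - y| := by
  rw [Set.mem_Ioo, not_and_or, not_lt, not_lt] at hy
  rcases hy with hy | hy
  · exact (min_le_left _ _).trans (by linarith [le_abs_self (u - y)])
  · exact (min_le_right _ _).trans (by linarith [neg_abs_le (u - y)])

theorem min_theta_sub_le_pow_mul_dist (α : ℝ) (n : ℕ) {x : ℝ} (hx : x ∈ cantorSet) :
    min (theta α n - 1 / 3) (2 / 3 - theta α n) ≤ 3 ^ n * dist α x := by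
  have hsplit := Int.floor_add_fract (3 ^ n * α)
  have := min_sub_le_abs_sub_of_notMem_Ioo (u := 3 ^ n * α)
    (pow_three_mul_notMem_Ioo_of_mem_cantorSet hx n ⌊3 ^ n * α⌋)
  rw [Real.dist_eq, ← abs_of_pos (by positivity : (0 : ℝ) < 3 ^ n), ← abs_mul, mul_sub]
  unfold theta
  convert this using 2 <;> linarith

section QuadraticIrrational

variable {α : ℝ} {a b c : ℤ}

theorem one_le_abs_mul_abs_of_quadratic_root (hirr : Irrational α) (ha : a ≠ 0)
    (hroot : (a : ℝ) * α ^ 2 + b * α + c = 0) {p q : ℤ} (hq : q ≠ 0) :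
    1 ≤ |q * α - p| * |a * p + a * q * α + b * q| := by
  have hfactor : (p - q * α) * (a * p + a * q * α + b * q) =
      ((a * p ^ 2 + b * p * q + c * q ^ 2 : ℤ) : ℝ) := by
    push_cast
    linear_combination (-(q : ℝ) ^ 2) * hroot
  have hne : a * p ^ 2 + b * p * q + c * q ^ 2 ≠ 0 := by
    intro h
    rw [h, Int.cast_zero, mul_eq_zero] at hfactor
    rcases hfactor with h | h
    · exact (hirr.intCast_mul hq).ne_int p (by linarith)
    · refine (hirr.intCast_mul (mul_ne_zero ha hq)).ne_int (-(a * p + b * q)) ?_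
      push_cast
      linarith
  rw [abs_sub_comm, ← abs_mul, hfactor, ← Int.cast_abs]
  exact_mod_cast Int.one_le_abs hne

theorem one_le_mul_abs_sub_of_quadratic_root (hirr : Irrational α) (ha : a ≠ 0)
    (hroot : (a : ℝ) * α ^ 2 + b * α + c = 0) {H : ℝ} (haH : |(a : ℝ)| ≤ H)
    (hbH : |(b : ℝ)| ≤ H) (hα : |α| ≤ 1) {p q : ℤ} (hq : q ≠ 0) (hpq : |(p : ℝ)| ≤ |(q : ℝ)|) :
    1 ≤ 3 * H * |(q : ℝ)| * |q * α - p| := by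
  have hH : 0 ≤ H := (abs_nonneg _).trans haH
  have hbound : |a * p + a * q * α + b * q| ≤ 3 * H * |(q : ℝ)| := by
    calc |a * p + a * q * α + b * q|
        ≤ |(a : ℝ)| * |(p : ℝ)| + |(a : ℝ)| * |(q : ℝ)| * |α| + |(b : ℝ)| * |(q : ℝ)| := by
          simpa only [abs_mul] using abs_add_three ((a : ℝ) * p) ((a : ℝ) * q * α) ((b : ℝ) * q)
      _ ≤ H * |(q : ℝ)| + H * |(q : ℝ)| * 1 + H * |(q : ℝ)| := by gcongr
      _ = 3 * H * |(q : ℝ)| := by ring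
  calc (1 : ℝ) ≤ |q * α - p| * |a * p + a * q * α + b * q| :=
        one_le_abs_mul_abs_of_quadratic_root hirr ha hroot hq
    _ ≤ |q * α - p| * (3 * H * |(q : ℝ)|) := by gcongr
    _ = 3 * H * |(q : ℝ)| * |q * α - p| := by ring

theorem one_le_mul_abs_theta_sub (hα0 : 0 < α) (hα1 : α < 1) (hirr : Irrational α) (ha : a ≠ 0)
    (hroot : (a : ℝ) * α ^ 2 + b * α + c = 0) {H : ℝ} (haH : |(a : ℝ)| ≤ H)
    (hbH : |(b : ℝ)| ≤ H) (n : ℕ) {j : ℤ} (hj0 : 0 ≤ j) (hj3 : j ≤ 3) :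
    1 ≤ 27 * H * 3 ^ n * |theta α n - j / 3| := by
  set k := ⌊3 ^ n * α⌋
  have hsplit : (k : ℝ) + theta α n = 3 ^ n * α := Int.floor_add_fract _
  have hk0 : 0 ≤ k := Int.floor_nonneg.mpr (by positivity)
  have hk : k < 3 ^ n := by
    refine Int.floor_lt.mpr ?_
    push_cast
    nlinarith [pow_pos (three_pos : (0 : ℝ) < 3) n]
  have hq : (3 : ℤ) ^ (n + 1) ≠ 0 := by positivity
  have hpq : |((3 * k + j : ℤ) : ℝ)| ≤ |(((3 : ℤ) ^ (n + 1) : ℤ) : ℝ)| := by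
    rw [← Int.cast_abs, ← Int.cast_abs, Int.cast_le, abs_of_nonneg (by omega),
      abs_of_pos (by positivity), pow_succ]
    omega
  have := one_le_mul_abs_sub_of_quadratic_root hirr ha hroot haH hbH
    (abs_le.mpr ⟨by linarith, hα1.le⟩) hq hpq
  have hlin : (3 : ℝ) ^ (n + 1) * α - (3 * k + j) = 3 * (theta α n - j / 3) := by
    linear_combination -3 * hsplit
  push_cast at this
  rw [hlin, abs_mul, abs_of_pos (by positivity), abs_of_pos three_pos, pow_succ] at this
  linarith

theorem one_div_le_infDist_cantorSet_of_theta_mem (hα0 : 0 < α) (hα1 : α < 1)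
    (hirr : Irrational α) (ha : a ≠ 0) (hroot : (a : ℝ) * α ^ 2 + b * α + c = 0) {H : ℝ}
    (haH : |(a : ℝ)| ≤ H) (hbH : |(b : ℝ)| ≤ H) {n : ℕ}
    (hθ : theta α n ∈ Set.Icc (1 / 3 : ℝ) (2 / 3)) :
    1 / (27 * H * 9 ^ n) ≤ Metric.infDist α cantorSet := by
  have hH : 0 < H := (abs_pos.mpr (Int.cast_ne_zero.mpr ha)).trans_le haH
  have hdiophantine (j : ℤ) (hj0 : 0 ≤ j) (hj3 : j ≤ 3) :=
    one_le_mul_abs_theta_sub hα0 hα1 hirr ha hroot haH hbH n hj0 hj3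
  have hgap : 1 / (27 * H * 3 ^ n) ≤ min (theta α n - 1 / 3) (2 / 3 - theta α n) := by
    have h1 := hdiophantine 1 zero_le_one (by norm_num)
    have h2 := hdiophantine 2 zero_le_two (by norm_num)
    push_cast at h1 h2
    rw [abs_of_nonneg (by linarith [hθ.1])] at h1
    rw [abs_of_nonpos (by linarith [hθ.2])] at h2
    apply le_min <;> rw [div_le_iff₀ (by positivity)] <;> linarith
  rw [Metric.le_infDist ⟨0, zero_mem_cantorSet⟩]
  intro x hx
  have h3n : (0 : ℝ) < 3 ^ n := by positivity
  calc 1 / (27 * H * 9 ^ n) = 1 / (27 * H * 3 ^ n) / 3 ^ n := by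
        rw [show (9 : ℝ) ^ n = 3 ^ n * 3 ^ n by rw [← mul_pow]; norm_num]
        field_simp
    _ ≤ dist α x := by
      rw [div_le_iff₀ h3n, mul_comm (dist α x)]
      exact hgap.trans (min_theta_sub_le_pow_mul_dist α n hx)

end QuadraticIrrational

theorem stmt2_general (α : ℝ) (a b c : ℤ) (H : ℕ)
    (hα0 : 0 < α) (hα1 : α < 1) (hirr : Irrational α)
    (ha : a ≠ 0) (hroot : (a : ℝ) * α ^ 2 + (b : ℝ) * α + (c : ℝ) = 0)
    (hH : H = max a.natAbs (max b.natAbs c.natAbs))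
    (N : ℕ)
    (hexit : theta α (N - 1) ∈ Set.Ico (1/3 : ℝ) (2/3)) :
    Metric.infDist α cantorSet ≥ 1 / (30 * (H : ℝ) ^ 2) * (1 / 3 ^ (2 * N)) := by
  have habs_le {z : ℤ} (hz : z.natAbs ≤ H) : |(z : ℝ)| ≤ H := by
    rwa [← Int.cast_abs, ← Nat.cast_natAbs, Nat.cast_le]
  have haH : |(a : ℝ)| ≤ H := habs_le (hH ▸ le_max_left _ _)
  have hbH : |(b : ℝ)| ≤ H := habs_le (hH ▸ (le_max_left _ _).trans (le_max_right _ _))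
  have hH1 : (1 : ℝ) ≤ H := by
    have : (1 : ℝ) ≤ |(a : ℝ)| := by
      rw [← Int.cast_abs]
      exact_mod_cast Int.one_le_abs ha
    linarith
  calc 1 / (30 * (H : ℝ) ^ 2) * (1 / 3 ^ (2 * N)) = 1 / (30 * H ^ 2 * 9 ^ N) := by
        rw [one_div_mul_one_div, pow_mul]
        norm_num
    _ ≤ 1 / (27 * (H : ℝ) * 9 ^ (N - 1)) := by
      gcongr 1 / (?_ * ?_ * ?_)
      · norm_num
      · nlinarith
      · exact pow_le_pow_right₀ (by norm_num) (Nat.sub_le N 1)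
    _ ≤ Metric.infDist α cantorSet :=
      one_div_le_infDist_cantorSet_of_theta_mem hα0 hα1 hirr ha hroot haH hbH
        (Set.Ico_subset_Icc_self hexit)

/-- Distance bound in terms of H alone: for a quadratic irrational α ∈ (0,1)
of height H ≥ 2 with finite exit time N, dist(α, 𝒞) ≥ (1/(30 H²))·3^{-2N}.
Here `cantorSet` is Mathlib's middle-third Cantor set. -/
theorem stmt2 (α : ℝ) (a b c : ℤ) (H : ℕ)
    (hα0 : 0 < α) (hα1 : α < 1) (hirr : Irrational α)
    (ha : a ≠ 0) (hroot : (a : ℝ) * α ^ 2 + (b : ℝ) * α + (c : ℝ) = 0)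
    (hprim : Int.gcd a (Int.gcd b c) = 1)
    (hH : H = max a.natAbs (max b.natAbs c.natAbs)) (hH2 : 2 ≤ H)
    (N : ℕ) (hN : 1 ≤ N)
    (hexit : theta α (N - 1) ∈ Set.Ico (1/3 : ℝ) (2/3))
    (hmin : ∀ m, m < N - 1 → theta α m ∉ Set.Ico (1/3 : ℝ) (2/3)) :
    Metric.infDist α cantorSet ≥ 1 / (30 * (H : ℝ) ^ 2) * (1 / 3 ^ (2 * N)) :=
  stmt2_general α a b c H hα0 hα1 hirr ha hroot hH N hexit
end

section
/- Let α be a real number whose fractional part θ_0 = {α} satisfies min_{0 ≤ k ≤ 9} |θ_0 − k/9| ≥ 0.04 (i.e. δ_𝒞(α) ≥ 0.04), and suppose α is irrational. Then exit(α) ≤ 3; that is, θ_N ∈ M = [1/3, 2/3) for some N ≤ 2. -/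
theorem Int.fract_natCast_mul_fract {R : Type*} [Ring R] [LinearOrder R] [IsOrderedRing R]
    [FloorRing R] (n : ℕ) (a : R) : Int.fract (n * Int.fract a) = Int.fract (n * a) := by
  rw [← Int.self_sub_floor a, mul_sub, ← Int.cast_natCast n, ← Int.cast_mul, Int.fract_sub_intCast]

theorem Int.fract_natCast_mul_mem_Icc_of_le_abs_sub {K : Type*} [Field K] [LinearOrder K]
    [IsStrictOrderedRing K] [FloorRing K] {n : ℕ} {x d : K} (hn : 0 < n)
    (hx₀ : 0 ≤ x) (hx₁ : x < 1) (h : ∀ k : ℕ, k ≤ n → d ≤ |x - k / n|) :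
    Int.fract (n * x) ∈ Set.Icc (n * d) (1 - n * d) := by
  have hn' : (0 : K) < n := Nat.cast_pos.mpr hn
  have hnx : 0 ≤ (n : K) * x := mul_nonneg hn'.le hx₀
  set m := ⌊(n : K) * x⌋₊
  have hm_lt : m < n := (Nat.floor_lt hnx).mpr (mul_lt_of_lt_one_right hn' hx₁)
  have hfract : Int.fract ((n : K) * x) = n * x - m := by
    rw [Int.fract, ← natCast_floor_eq_intCast_floor hnx]
  -- `|x - k / n| = |n x - k| / n`, so the hypothesis bounds the distance of `n x` to `m` and `m + 1`.
  have hscale : ∀ k : ℕ, k ≤ n → n * d ≤ |n * x - k| := fun k hk => by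
    have := h k hk
    rwa [show x - k / n = (n * x - k) / n by field_simp, abs_div, Nat.abs_cast,
      le_div_iff₀ hn', mul_comm] at this
  have hlow := hscale m hm_lt.le
  have hhigh := hscale (m + 1) hm_lt
  rw [abs_of_nonneg (sub_nonneg.mpr (Nat.floor_le hnx))] at hlow
  rw [abs_of_neg (by push_cast; linarith [Nat.lt_floor_add_one ((n : K) * x)])] at hhigh
  push_cast at hhigh
  rw [hfract]
  constructor <;> linarith

theorem stmt3_general (α : ℝ)
    (hδ : ∀ k : ℕ, k ≤ 9 → |Int.fract α - (k : ℝ) / 9| ≥ 0.04) :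
    ∃ N : ℕ, N ≤ 2 ∧ theta α N ∈ Set.Ico (1/3 : ℝ) (2/3) := by
  have hθ₂ : theta α 2 = Int.fract ((9 : ℕ) * Int.fract α) := by
    rw [Int.fract_natCast_mul_fract]
    norm_num [theta]
  have hmem := Int.fract_natCast_mul_mem_Icc_of_le_abs_sub (n := 9) (by norm_num)
    (Int.fract_nonneg α) (Int.fract_lt_one α) (d := 0.04) (by exact_mod_cast hδ)
  refine ⟨2, le_rfl, ?_⟩
  rw [hθ₂]
  norm_num at hmem ⊢
  constructor <;> linarith [hmem.1, hmem.2]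

/-- Far from boundary: if the fractional part of an irrational α stays at
distance ≥ 0.04 from every level-2 Cantor endpoint k/9 (0 ≤ k ≤ 9), then
exit(α) ≤ 3, i.e. θ_N ∈ M = [1/3,2/3) for some N ≤ 2. -/
theorem stmt3 (α : ℝ) (hirr : Irrational α)
    (hδ : ∀ k : ℕ, k ≤ 9 → |Int.fract α - (k : ℝ) / 9| ≥ 0.04) :
    ∃ N : ℕ, N ≤ 2 ∧ theta α N ∈ Set.Ico (1/3 : ℝ) (2/3) :=
  stmt3_general α hδ
end

section
/- Let α be an irrational real number with δ_𝒞(α) ≥ 0.02. Then either (a) θ_N ∈ M = [1/3, 2/3) for some N ≤ 4, or (b) θ_N ∈ R = [2/3, 1) for some N ≤ 5. In particular the orbit (θ_N) enters M ∪ R by time N₀ ≤ 5. -/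
theorem Int.fract_mul_natCast_of_fract_mul_lt_one {x : ℝ} {m : ℕ}
    (h : Int.fract x * m < 1) : Int.fract (x * m) = Int.fract x * m := by
  obtain ⟨z, hz⟩ := Int.fract_mul_natCast x m
  rw [Int.fract_eq_iff]
  refine ⟨by positivity, h, ⌊x * m⌋ - z, ?_⟩
  push_cast
  linarith [Int.floor_add_fract (x * m)]

theorem theta_zero (α : ℝ) : theta α 0 = Int.fract α := by
  simp [theta]

theorem theta_succ_of_lt {α : ℝ} {n : ℕ} (h : theta α n < 1 / 3) :
    theta α (n + 1) = 3 * theta α n := by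
  rw [theta] at h ⊢
  have htriple := Int.fract_mul_natCast_of_fract_mul_lt_one (m := 3) (by push_cast; linarith)
  push_cast at htriple
  rw [pow_succ, mul_right_comm, htriple, mul_comm, theta]

theorem theta_eq_pow_mul_fract_of_forall_lt {α : ℝ} {n : ℕ}
    (h : ∀ k < n, theta α k < 1 / 3) : theta α n = 3 ^ n * Int.fract α := by
  induction n with
  | zero => simp [theta_zero]
  | succ n ih =>
    rw [theta_succ_of_lt (h n n.lt_succ_self), ih fun k hk => h k (by omega), pow_succ]
    ring

theorem exists_le_one_third_le_theta {α : ℝ} {n : ℕ}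
    (h : 1 / 3 ≤ 3 ^ n * Int.fract α) : ∃ N ≤ n, 1 / 3 ≤ theta α N := by
  by_contra! hL
  have := theta_eq_pow_mul_fract_of_forall_lt fun k hk => hL k hk.le
  linarith [hL n le_rfl]

theorem stmt4_general (α : ℝ)
    (hδ : ∀ k : ℕ, k ≤ 9 → |Int.fract α - (k : ℝ) / 9| ≥ 0.02) :
    ((∃ N : ℕ, N ≤ 4 ∧ theta α N ∈ Set.Ico (1/3 : ℝ) (2/3)) ∨
      (∃ N : ℕ, N ≤ 5 ∧ theta α N ∈ Set.Ico (2/3 : ℝ) 1)) ∧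
    (∃ N : ℕ, N ≤ 5 ∧ theta α N ∈ Set.Ico (1/3 : ℝ) (2/3) ∪ Set.Ico (2/3 : ℝ) 1) := by
  have hfract : 0.02 ≤ Int.fract α := by
    simpa [abs_of_nonneg (Int.fract_nonneg α)] using hδ 0 (Nat.zero_le 9)
  obtain ⟨N, hN, hge⟩ := exists_le_one_third_le_theta (α := α) (n := 4) (by linarith)
  have hlt : theta α N < 1 := Int.fract_lt_one _
  rcases lt_or_ge (theta α N) (2 / 3) with hM | hR
  · exact ⟨.inl ⟨N, hN, hge, hM⟩, N, by omega, .inl ⟨hge, hM⟩⟩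
  · exact ⟨.inr ⟨N, by omega, hR, hlt⟩, N, by omega, .inr ⟨hR, hlt⟩⟩

/-- Early R-hit or M-visit: if α is irrational with δ_𝒞(α) ≥ 0.02 (the
fractional part of α is at distance ≥ 0.02 from every k/9, 0 ≤ k ≤ 9), then
either θ_N ∈ M = [1/3,2/3) for some N ≤ 4, or θ_N ∈ R = [2/3,1) for some
N ≤ 5; in particular the orbit enters M ∪ R by time N₀ ≤ 5. -/
theorem stmt4 (α : ℝ) (hirr : Irrational α)
    (hδ : ∀ k : ℕ, k ≤ 9 → |Int.fract α - (k : ℝ) / 9| ≥ 0.02) :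
    ((∃ N : ℕ, N ≤ 4 ∧ theta α N ∈ Set.Ico (1/3 : ℝ) (2/3)) ∨
      (∃ N : ℕ, N ≤ 5 ∧ theta α N ∈ Set.Ico (2/3 : ℝ) 1)) ∧
    (∃ N : ℕ, N ≤ 5 ∧ theta α N ∈ Set.Ico (1/3 : ℝ) (2/3) ∪ Set.Ico (2/3 : ℝ) 1) :=
  stmt4_general α hδ
end

section
/- There exists an absolute constant C > 0 with the following property: if α is a quadratic irrational of height H, and for some N₀ ≥ 0 one has θ_{N₀} ∈ R = [2/3, 1) and θ_{N₀+1}, …, θ_{N₀+k} ∈ L = [0, 1/3), then k ≤ N₀ + 2 log₃ H + C. -/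
/-!
A run `R L^k` starting at time `N₀` forces `e = 3θ_{N₀} - 2 = 3^{N₀+1} α - p` to satisfy
`0 < e < 3^{-k}`, so `p / 3^{N₀+1}` is an exceptionally good rational approximation of `α`.
For a quadratic irrational this is impossible beyond a Liouville-type bound: with
`Q = 3^{N₀+1}`, the integer `a p² + b p Q + c Q²` equals `-e (a Q α + b Q + a p)`, is nonzero
by irrationality, and its second factor is `O(H² Q)`; hence `1 ≤ 6 H² Q e < 6 H² Q 3^{-k}`.
-/

open Set

lemma abs_le_add_one_of_quadratic_root {a b c α H : ℝ} (ha : 1 ≤ |a|) (hb : |b| ≤ H)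
    (hc : |c| ≤ H) (hroot : a * α ^ 2 + b * α + c = 0) : |α| ≤ H + 1 := by
  have hsq : |a| * |α| ^ 2 ≤ H * |α| + H :=
    calc |a| * |α| ^ 2 = |b * α + c| := by
          rw [← abs_pow, ← abs_mul, show a * α ^ 2 = -(b * α + c) by linarith, abs_neg]
      _ ≤ |b| * |α| + |c| := by rw [← abs_mul]; exact abs_add_le _ _
      _ ≤ H * |α| + H := by gcongr
  by_contra! hlt
  nlinarith [abs_nonneg α, abs_nonneg b]

lemma abs_linear_form_le {a b c α H p Q : ℝ} (ha : 1 ≤ |a|) (haH : |a| ≤ H) (hb : |b| ≤ H)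
    (hc : |c| ≤ H) (hroot : a * α ^ 2 + b * α + c = 0) (hQ : 1 ≤ Q) (he : |Q * α - p| ≤ 1) :
    |a * Q * α + b * Q + a * p| ≤ 6 * H ^ 2 * Q := by
  have hα := abs_le_add_one_of_quadratic_root ha hb hc hroot
  have hH : 1 ≤ H := ha.trans haH
  calc |a * Q * α + b * Q + a * p| = |Q * (2 * a * α + b) - a * (Q * α - p)| := by ring_nf
    _ ≤ Q * (2 * |a| * |α| + |b|) + |a| * |Q * α - p| := by
        refine (abs_sub _ _).trans (add_le_add ?_ (abs_mul _ _).le)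
        rw [abs_mul, abs_of_pos (by linarith)]
        gcongr
        refine (abs_add_le _ _).trans ?_
        rw [abs_mul, abs_mul, abs_two]
    _ ≤ Q * (2 * H * (H + 1) + H) + H * 1 := by gcongr
    _ ≤ 6 * H ^ 2 * Q := by
        have hHQ : H * Q ≤ H ^ 2 * Q :=
          mul_le_mul_of_nonneg_right (by nlinarith) (by linarith)
        nlinarith

theorem Irrational.one_le_abs_sub_mul_of_quadratic {α : ℝ} (hα : Irrational α) {a b c : ℤ}
    {H : ℝ} (ha : a ≠ 0) (haH : |(a : ℝ)| ≤ H) (hbH : |(b : ℝ)| ≤ H) (hcH : |(c : ℝ)| ≤ H)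
    (hroot : (a : ℝ) * α ^ 2 + b * α + c = 0) (p : ℤ) {Q : ℤ} (hQ : 0 < Q) :
    1 ≤ |Q * α - p| * (6 * H ^ 2 * Q) := by
  have ha1 : (1 : ℝ) ≤ |(a : ℝ)| := by exact_mod_cast Int.one_le_abs ha
  have hQ1 : (1 : ℝ) ≤ Q := by exact_mod_cast hQ
  have hH : 1 ≤ H := ha1.trans haH
  rcases lt_or_ge 1 |Q * α - p| with he | he
  · exact one_le_mul_of_one_le_of_one_le he.le (by nlinarith)
  have hform : (((a * p ^ 2 + b * p * Q + c * Q ^ 2 : ℤ)) : ℝ) =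
      -((Q * α - p) * (a * Q * α + b * Q + a * p)) := by
    push_cast
    linear_combination (Q : ℝ) ^ 2 * hroot
  have he0 : (Q : ℝ) * α - p ≠ 0 := ((hα.intCast_mul hQ.ne').sub_intCast p).ne_zero
  have hlin0 : (a : ℝ) * Q * α + b * Q + a * p ≠ 0 := by
    have := ((hα.intCast_mul (mul_ne_zero ha hQ.ne')).add_intCast (b * Q + a * p)).ne_zero
    push_cast at this
    convert this using 1
    ring
  have hn : a * p ^ 2 + b * p * Q + c * Q ^ 2 ≠ 0 := by
    intro h0
    have := congrArg (fun n : ℤ => (n : ℝ)) h0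
    simp only [hform, Int.cast_zero, neg_eq_zero, mul_eq_zero] at this
    tauto
  calc (1 : ℝ) ≤ |(((a * p ^ 2 + b * p * Q + c * Q ^ 2 : ℤ)) : ℝ)| := by
        exact_mod_cast Int.one_le_abs hn
    _ = |Q * α - p| * |a * Q * α + b * Q + a * p| := by rw [hform, abs_neg, abs_mul]
    _ ≤ |Q * α - p| * (6 * H ^ 2 * Q) := by
        gcongr
        exact abs_linear_form_le ha1 haH hbH hcH hroot hQ1 he

lemma Int.fract_three_mul_fract (x : ℝ) : Int.fract (3 * Int.fract x) = Int.fract (3 * x) := by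
  rw [show 3 * Int.fract x = 3 * x - ((3 * ⌊x⌋ : ℤ) : ℝ) by
    rw [← Int.self_sub_floor]; push_cast; ring, Int.fract_sub_intCast]

lemma theta_succ (α : ℝ) (n : ℕ) : theta α (n + 1) = Int.fract (3 * theta α n) := by
  rw [theta, theta, Int.fract_three_mul_fract, pow_succ, mul_comm _ (3 : ℝ), mul_assoc]

lemma three_mul_theta_sub_two (α : ℝ) (n : ℕ) :
    3 * theta α n - 2 = ((3 ^ (n + 1) : ℤ) : ℝ) * α - ((3 * ⌊3 ^ n * α⌋ + 2 : ℤ) : ℝ) := by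
  rw [theta, ← Int.self_sub_floor]
  push_cast
  ring

section Dynamics

variable {α : ℝ}

lemma theta_succ_of_mem_Ico {n : ℕ} (h : theta α n ∈ Ico (2 / 3 : ℝ) 1) :
    theta α (n + 1) = 3 * theta α n - 2 := by
  rw [theta_succ, ← Int.fract_sub_intCast _ 2, Int.cast_ofNat]
  exact Int.fract_eq_self.2 ⟨by linarith [h.1], by linarith [h.2]⟩

lemma theta_add_of_forall_mem_Ico {n j : ℕ}
    (h : ∀ i < j, theta α (n + i) ∈ Ico (0 : ℝ) (1 / 3)) : theta α (n + j) = 3 ^ j * theta α n := by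
  induction j with
  | zero => simp
  | succ j ih =>
    have ih := ih fun i hi => h i (hi.trans j.lt_succ_self)
    have hj := h j j.lt_succ_self
    rw [ih] at hj
    rw [← add_assoc, theta_succ, ih, Int.fract_eq_self.2 ⟨by linarith [hj.1], by linarith [hj.2]⟩,
      pow_succ]
    ring

lemma three_pow_mul_lt_one_of_run {N k : ℕ} (hR : theta α N ∈ Ico (2 / 3 : ℝ) 1)
    (hL : ∀ j, 1 ≤ j → j ≤ k → theta α (N + j) ∈ Ico (0 : ℝ) (1 / 3)) :
    3 ^ k * (3 * theta α N - 2) < 1 := by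
  cases k with
  | zero => simp only [pow_zero, one_mul]; linarith [hR.2]
  | succ k =>
    have hlast := (hL (k + 1) (by omega) le_rfl).2
    rw [← add_assoc, add_right_comm, theta_add_of_forall_mem_Ico fun i hi => by
      simpa only [add_right_comm, add_assoc] using hL (i + 1) (by omega) (by omega),
      theta_succ_of_mem_Ico hR] at hlast
    rw [pow_succ]
    linarith

end Dynamics

lemma nat_lt_add_two_mul_logb_of_three_pow_lt {k m : ℕ} {x : ℝ} (hx : 0 < x)
    (h : (3 : ℝ) ^ k < 3 ^ m * x ^ 2) : (k : ℝ) < m + 2 * Real.logb 3 x := by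
  have := Real.logb_lt_logb (b := 3) (by norm_num) (by positivity) h
  rwa [Real.logb_mul (by positivity) (by positivity), Real.logb_pow, Real.logb_pow,
    Real.logb_pow, Real.logb_self_eq_one (by norm_num), mul_one, mul_one] at this

/-- Universal L-run bound: there is an absolute constant C > 0 such that for
any quadratic irrational α of height H, if θ_{N₀} ∈ R = [2/3,1) and
θ_{N₀+1},…,θ_{N₀+k} ∈ L = [0,1/3), then k ≤ N₀ + 2 log₃ H + C. -/
theorem stmt7 :
    ∃ C : ℝ, 0 < C ∧
      ∀ (α : ℝ) (a b c : ℤ) (H : ℕ),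
        Irrational α → a ≠ 0 →
        (a : ℝ) * α ^ 2 + (b : ℝ) * α + (c : ℝ) = 0 →
        Int.gcd a (Int.gcd b c) = 1 →
        H = max a.natAbs (max b.natAbs c.natAbs) →
        ∀ (N₀ k : ℕ),
          theta α N₀ ∈ Set.Ico (2/3 : ℝ) 1 →
          (∀ j, 1 ≤ j → j ≤ k → theta α (N₀ + j) ∈ Set.Ico (0 : ℝ) (1/3)) →
          (k : ℝ) ≤ (N₀ : ℝ) + 2 * Real.logb 3 (H : ℝ) + C := by
  refine ⟨3, by norm_num, ?_⟩
  intro α a b c H hα ha hroot _ hH N₀ k hR hL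
  have hcoef : ∀ z : ℤ, z.natAbs ≤ H → |(z : ℝ)| ≤ H := fun z hz => by
    rw [← Int.cast_abs, Int.abs_eq_natAbs]; exact_mod_cast hz
  have hH1 : (1 : ℝ) ≤ H := by exact_mod_cast (show 1 ≤ H by have := Int.natAbs_pos.2 ha; omega)
  set e := 3 * theta α N₀ - 2 with he
  have he_pos : 0 < e := lt_of_le_of_ne (by linarith [hR.1]) <| by
    rw [he, three_mul_theta_sub_two]
    exact ((hα.intCast_mul (by positivity)).sub_intCast _).ne_zero.symm
  have hliouville : 1 ≤ e * (6 * H ^ 2 * 3 ^ (N₀ + 1)) := by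
    have := hα.one_le_abs_sub_mul_of_quadratic ha (hcoef a (by omega)) (hcoef b (by omega))
      (hcoef c (by omega)) hroot (3 * ⌊3 ^ N₀ * α⌋ + 2) (Q := 3 ^ (N₀ + 1)) (by positivity)
    rwa [← three_mul_theta_sub_two, ← he, abs_of_pos he_pos, Int.cast_pow, Int.cast_ofNat] at this
  have hrun : 3 ^ k * e < 1 := three_pow_mul_lt_one_of_run hR hL
  have hpow : (3 : ℝ) ^ k < 3 ^ (N₀ + 3) * (H : ℝ) ^ 2 := by
    have hlt : 3 ^ k * e < 6 * H ^ 2 * 3 ^ (N₀ + 1) * e := by linarith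
    calc (3 : ℝ) ^ k < 6 * H ^ 2 * 3 ^ (N₀ + 1) := lt_of_mul_lt_mul_right hlt he_pos.le
      _ ≤ 3 ^ (N₀ + 3) * (H : ℝ) ^ 2 := by
        rw [show (3 : ℝ) ^ (N₀ + 3) = 9 * 3 ^ (N₀ + 1) by ring]
        nlinarith [mul_nonneg (pow_pos (by norm_num : (0 : ℝ) < 3) (N₀ + 1)).le (sq_nonneg (H : ℝ))]
  have hk := nat_lt_add_two_mul_logb_of_three_pow_lt (by linarith) hpow
  push_cast at hk
  linarith
end

section
/- There exists an absolute constant C⋆ > 0 with the following property. Let α be a quadratic irrational with primitive integer minimal polynomial f(x) = ax² + bx + c and height H = max(|a|,|b|,|c|). For every N ≥ 0, with p_N = 3⌊3^N α⌋ + 2 and q_N = 3^{N+1}, the integer A_N := a p_N² + b p_N q_N + c q_N² is nonzero and satisfies |A_N| ≤ C⋆ · H² · q_N · |θ_N − 2/3|, where θ_N = {3^N α}. Moreover, if θ_N ∈ R = [2/3, 1) and θ_{N+1}, …, θ_{N+k} ∈ L = [0, 1/3) for some k ≥ 1, then |θ_N − 2/3| < 3^{−(k+1)} and hence |A_N| ≤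 C⋆ · H² · 3^{N−k}. -/
/-- The numerator p_N = 3⌊3^N α⌋ + 2 of the digit-forced triadic rational. -/
noncomputable def pN (α : ℝ) (N : ℕ) : ℤ := 3 * ⌊(3 : ℝ) ^ N * α⌋ + 2

/-- A_N = a p_N² + b p_N q_N + c q_N² with q_N = 3^{N+1}. -/
noncomputable def AN (α : ℝ) (a b c : ℤ) (N : ℕ) : ℤ :=
  a * (pN α N) ^ 2 + b * (pN α N) * 3 ^ (N + 1) + c * (3 ^ (N + 1)) ^ 2

/-! The integer `A_N` is `q_N² f(p_N/q_N)`, and Taylor expansion of `f` at `α` gives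
`A_N = a d² + q_N f'(α) d` with `d = p_N - q_N α = -3 (θ_N - 2/3)`. Both factors of
`A_N = d (a d + q_N f'(α))` are integer-affine in `α` with nonzero slope, hence nonzero, and the
Cauchy bound `|α| ≤ 1 + H` controls `f'(α)`, so `|A_N| ≪ H² q_N |θ_N - 2/3|`.
If `θ_N ∈ R` and the next `k` iterates lie in `L`, then `3^j (θ_N - 2/3)` stays in `[0, 1/3)`
for `j ≤ k`, since `θ_{N+j} = {3^j (θ_N - 2/3)}`; this gives `θ_N - 2/3 < 3^{-(k+1)}`. -/

lemma Irrational.intCast_mul_add_intCast_ne_zero {x : ℝ} (hx : Irrational x) {m : ℤ} (hm : m ≠ 0)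
    (n : ℤ) : (m : ℝ) * x + n ≠ 0 :=
  ((hx.intCast_mul hm).add_intCast n).ne_zero

lemma abs_le_one_add_of_quadratic_root {a b c α H : ℝ} (ha : 1 ≤ |a|) (hb : |b| ≤ H)
    (hc : |c| ≤ H) (hα : a * α ^ 2 + b * α + c = 0) : |α| ≤ 1 + H := by
  by_contra! hlt
  have hsq : |α| ^ 2 ≤ H * |α| + H :=
    calc |α| ^ 2 ≤ |a| * |α| ^ 2 := le_mul_of_one_le_left (by positivity) ha
      _ = |b * α + c| := by rw [← abs_pow, ← abs_mul, show a * α ^ 2 = -(b * α + c) by linarith,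
          abs_neg]
      _ ≤ |b| * |α| + |c| := (abs_add_le _ _).trans_eq (by rw [abs_mul])
      _ ≤ H * |α| + H := by gcongr
  nlinarith [abs_nonneg b]

lemma three_pow_mul_lt_third {x : ℝ} (hx0 : 0 ≤ x) (hx : x < 1 / 3) {k : ℕ}
    (h : ∀ j, 1 ≤ j → j ≤ k → Int.fract (3 ^ j * x) < 1 / 3) : 3 ^ k * x < 1 / 3 := by
  induction k with
  | zero => simpa using hx
  | succ k ih =>
    have hk := ih fun j hj hjk => h j hj (hjk.trans k.le_succ)
    have hfract : Int.fract (3 ^ (k + 1) * x) = 3 ^ (k + 1) * x :=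
      Int.fract_eq_self.2 ⟨by positivity, by rw [pow_succ']; linarith⟩
    simpa [hfract] using h (k + 1) le_add_self le_rfl

lemma theta_nonneg (α : ℝ) (n : ℕ) : 0 ≤ theta α n := Int.fract_nonneg _

lemma theta_lt_one (α : ℝ) (n : ℕ) : theta α n < 1 := Int.fract_lt_one _

lemma theta_add (α : ℝ) (n j : ℕ) : theta α (n + j) = Int.fract (3 ^ j * theta α n) := by
  have h : (3 : ℝ) ^ (n + j) * α = 3 ^ j * theta α n + ((3 ^ j * ⌊(3 : ℝ) ^ n * α⌋ : ℤ) : ℝ) := by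
    rw [theta, Int.fract]
    push_cast
    ring
  rw [theta, h, Int.fract_add_intCast]

lemma pN_sub_mul (α : ℝ) (N : ℕ) :
    (pN α N : ℝ) - 3 ^ (N + 1) * α = -3 * (theta α N - 2 / 3) := by
  rw [pN, theta, Int.fract]
  push_cast
  ring

section QuadraticForm

variable {α : ℝ} {a b c : ℤ}

lemma AN_eq_mul (hα : (a : ℝ) * α ^ 2 + b * α + c = 0) (N : ℕ) :
    (AN α a b c N : ℝ) = ((pN α N : ℝ) - 3 ^ (N + 1) * α) *
      (a * ((pN α N : ℝ) - 3 ^ (N + 1) * α) + 3 ^ (N + 1) * (2 * a * α + b)) := by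
  have hc : (c : ℝ) = -(a * α ^ 2) - b * α := by linarith
  rw [AN]
  push_cast
  rw [hc]
  ring

lemma AN_ne_zero (hirr : Irrational α) (ha : a ≠ 0) (hα : (a : ℝ) * α ^ 2 + b * α + c = 0)
    (N : ℕ) : AN α a b c N ≠ 0 := by
  have hq : (3 : ℤ) ^ (N + 1) ≠ 0 := by positivity
  have hd := hirr.intCast_mul_add_intCast_ne_zero (neg_ne_zero.2 hq) (pN α N)
  have he := hirr.intCast_mul_add_intCast_ne_zero (mul_ne_zero ha hq) (a * pN α N + b * 3 ^ (N + 1))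
  push_cast at hd he
  rw [← Int.cast_ne_zero (α := ℝ), AN_eq_mul hα]
  exact mul_ne_zero (by convert hd using 1; ring) (by convert he using 1; ring)

lemma abs_AN_le {H : ℝ} (ha : 1 ≤ |(a : ℝ)|) (haH : |(a : ℝ)| ≤ H) (hbH : |(b : ℝ)| ≤ H)
    (hcH : |(c : ℝ)| ≤ H) (hα : (a : ℝ) * α ^ 2 + b * α + c = 0) (N : ℕ) :
    |(AN α a b c N : ℝ)| ≤ 21 * H ^ 2 * 3 ^ (N + 1) * |theta α N - 2 / 3| := by
  set q : ℝ := 3 ^ (N + 1)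
  set d : ℝ := (pN α N : ℝ) - q * α
  have hH : 1 ≤ H := ha.trans haH
  have hq : 1 ≤ q := one_le_pow₀ (by norm_num)
  have hd : |d| = 3 * |theta α N - 2 / 3| := by
    rw [show d = -3 * (theta α N - 2 / 3) from pN_sub_mul α N, abs_mul]
    norm_num
  have hd2 : |d| ≤ 2 := by
    have : |theta α N - 2 / 3| ≤ 2 / 3 :=
      abs_le.2 ⟨by linarith [theta_nonneg α N], by linarith [theta_lt_one α N]⟩
    linarith
  have hderiv : |2 * a * α + b| ≤ 5 * H ^ 2 :=
    calc |2 * a * α + (b : ℝ)| ≤ 2 * |(a : ℝ)| * |α| + |(b : ℝ)| := by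
          refine (abs_add_le _ _).trans_eq ?_
          rw [abs_mul, abs_mul, abs_two]
      _ ≤ 2 * H * (1 + H) + H := by
          gcongr
          exact abs_le_one_add_of_quadratic_root ha hbH hcH hα
      _ ≤ 5 * H ^ 2 := by nlinarith
  calc |(AN α a b c N : ℝ)| = |d| * |a * d + q * (2 * a * α + b)| := by
        rw [AN_eq_mul hα, abs_mul]
    _ ≤ |d| * (H * 2 + q * (5 * H ^ 2)) := by
        gcongr
        refine (abs_add_le _ _).trans ?_
        rw [abs_mul, abs_mul, abs_of_pos (by positivity : 0 < q)]
        gcongr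
    _ ≤ |d| * (7 * H ^ 2 * q) := by gcongr; nlinarith
    _ = 21 * H ^ 2 * q * |theta α N - 2 / 3| := by rw [hd]; ring

end QuadraticForm

lemma theta_sub_two_thirds_lt {α : ℝ} {N k : ℕ} (hR : theta α N ∈ Set.Ico (2 / 3 : ℝ) 1)
    (hL : ∀ j, 1 ≤ j → j ≤ k → theta α (N + j) ∈ Set.Ico (0 : ℝ) (1 / 3)) :
    theta α N - 2 / 3 < ((3 : ℝ) ^ (k + 1))⁻¹ := by
  have hshift : ∀ j, 1 ≤ j → theta α (N + j) = Int.fract (3 ^ j * (theta α N - 2 / 3)) := by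
    intro j hj
    -- `3^(i+1) θ_N` and `3^(i+1) (θ_N - 2/3)` differ by the integer `2 * 3^i`
    obtain ⟨i, rfl⟩ := Nat.exists_eq_add_of_le' hj
    rw [theta_add, ← Int.fract_add_intCast (3 ^ (i + 1) * (theta α N - 2 / 3)) (2 * 3 ^ i)]
    push_cast
    ring_nf
  have hk := three_pow_mul_lt_third (sub_nonneg.2 hR.1) (by linarith [hR.2])
    fun j hj hjk => hshift j hj ▸ (hL j hj hjk).2
  rw [pow_succ, ← one_div, lt_div_iff₀ (by positivity)]
  linarith

/-- Small value of the quadratic form: there is an absolute constant C⋆ > 0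
such that for every quadratic irrational α with primitive minimal polynomial
ax²+bx+c and height H, and every N ≥ 0, the integer A_N is nonzero and
|A_N| ≤ C⋆ H² q_N |θ_N - 2/3|; moreover if θ_N ∈ R and θ_{N+1},…,θ_{N+k} ∈ L
(k ≥ 1), then |θ_N - 2/3| < 3^{-(k+1)} and |A_N| ≤ C⋆ H² 3^{N-k}. -/
theorem stmt9 :
    ∃ Cs : ℝ, 0 < Cs ∧
      ∀ (α : ℝ) (a b c : ℤ) (H : ℕ),
        Irrational α → a ≠ 0 →
        (a : ℝ) * α ^ 2 + (b : ℝ) * α + (c : ℝ) = 0 →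
        Int.gcd a (Int.gcd b c) = 1 →
        H = max a.natAbs (max b.natAbs c.natAbs) →
        ∀ N : ℕ,
          AN α a b c N ≠ 0 ∧
          (|AN α a b c N| : ℝ) ≤ Cs * (H : ℝ) ^ 2 * 3 ^ (N + 1) * |theta α N - 2/3| ∧
          ∀ k : ℕ, 1 ≤ k →
            theta α N ∈ Set.Ico (2/3 : ℝ) 1 →
            (∀ j, 1 ≤ j → j ≤ k → theta α (N + j) ∈ Set.Ico (0 : ℝ) (1/3)) →
            |theta α N - 2/3| < ((3 : ℝ) ^ (k + 1))⁻¹ ∧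
            (|AN α a b c N| : ℝ) ≤ Cs * (H : ℝ) ^ 2 * (3 : ℝ) ^ ((N : ℤ) - (k : ℤ)) := by
  refine ⟨21, by norm_num, fun α a b c H hirr ha hα _ hH N => ?_⟩
  have habs : ∀ m : ℤ, m.natAbs ≤ H → |(m : ℝ)| ≤ H := fun m hm => by
    rw [← Int.cast_abs, Int.abs_eq_natAbs]
    exact_mod_cast hm
  have hA := abs_AN_le (by exact_mod_cast Int.one_le_abs ha) (habs a (by omega))
    (habs b (by omega)) (habs c (by omega)) hα N
  refine ⟨AN_ne_zero hirr ha hα N, by exact_mod_cast hA, fun k _ hR hL => ?_⟩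
  have hθ : |theta α N - 2 / 3| < ((3 : ℝ) ^ (k + 1))⁻¹ := by
    rw [abs_of_nonneg (sub_nonneg.2 hR.1)]
    exact theta_sub_two_thirds_lt hR hL
  refine ⟨hθ, ?_⟩
  calc (|AN α a b c N| : ℝ) ≤ 21 * H ^ 2 * 3 ^ (N + 1) * |theta α N - 2 / 3| := by
        exact_mod_cast hA
    _ ≤ 21 * H ^ 2 * 3 ^ (N + 1) * ((3 : ℝ) ^ (k + 1))⁻¹ := by gcongr
    _ = 21 * H ^ 2 * (3 : ℝ) ^ ((N : ℤ) - k) := by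
        rw [zpow_sub₀ three_ne_zero, zpow_natCast, zpow_natCast]
        field_simp
        ring
end
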